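/- Let A be a real symmetric n×n matrix with n ≥ 2, eigenvalues λ_1 ≥ λ_2 ≥ … ≥ λ_n (with multiplicity), and set λ = max(λ_2, |λ_n|). Assume λ_1 ≥ 4λ. Then for every unit vector f ∈ ℝⁿ, the second-largest eigenvalue (in the nonincreasing list with multiplicity) of (I − f fᵀ) A (I − f fᵀ) is at most (3/4)·λ_1. -/

import Mathlib

set_option maxHeartbeats 1000000


open Matrix RealInnerProductSpace

section Aux

lemma aux_inner_eq_dot {n : ℕ} (x y : EuclideanSpace ℝ (Fin n)) :
    ⟪x, y⟫ = (x : Fin n → ℝ) ⬝ᵥ (y : Fin n → ℝ) := by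
  rw [EuclideanSpace.inner_eq_star_dotProduct]
  simp only [star_trivial]
  exact dotProduct_comm _ _

lemma aux_onb_expand {n : ℕ} {M : Matrix (Fin n) (Fin n) ℝ} (hM : M.IsHermitian)
    (y : Fin n → ℝ) :
    y = ∑ i, ((hM.eigenvectorBasis i : Fin n → ℝ) ⬝ᵥ y) • (hM.eigenvectorBasis i : Fin n → ℝ) := by
  have h := hM.eigenvectorBasis.sum_repr' (WithLp.toLp 2 y)
  have h2 : ∀ i, ⟪hM.eigenvectorBasis i, (WithLp.toLp 2 y)⟫
      = (hM.eigenvectorBasis i : Fin n → ℝ) ⬝ᵥ y := fun i => aux_inner_eq_dot _ _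
  calc y = (∑ i, ⟪hM.eigenvectorBasis i, (WithLp.toLp 2 y)⟫ • hM.eigenvectorBasis i :
      EuclideanSpace ℝ (Fin n)).ofLp := by rw [h]
    _ = _ := by simp only [h2, WithLp.ofLp_sum, WithLp.ofLp_smul]

lemma aux_onb_dot {n : ℕ} {M : Matrix (Fin n) (Fin n) ℝ} (hM : M.IsHermitian) (i j : Fin n) :
    (hM.eigenvectorBasis i : Fin n → ℝ) ⬝ᵥ (hM.eigenvectorBasis j : Fin n → ℝ)
      = if i = j then 1 else 0 := by
  rcases eq_or_ne i j with rfl | h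
  · have := hM.eigenvectorBasis.orthonormal.1 i
    have h2 : ⟪hM.eigenvectorBasis i, hM.eigenvectorBasis i⟫ = 1 := by
      rw [real_inner_self_eq_norm_sq, this]; norm_num
    rw [aux_inner_eq_dot] at h2
    simpa using h2
  · have h2 : ⟪hM.eigenvectorBasis i, hM.eigenvectorBasis j⟫ = 0 :=
      hM.eigenvectorBasis.orthonormal.2 h
    rw [aux_inner_eq_dot] at h2
    simpa [h] using h2

lemma aux_sum_dot {n : ℕ} (v : Fin n → Fin n → ℝ) (w : Fin n → ℝ) :
    (∑ i, v i) ⬝ᵥ w = ∑ i, v i ⬝ᵥ w := by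
  simp only [dotProduct, Finset.sum_apply, Finset.sum_mul]
  exact Finset.sum_comm

lemma aux_herm_transpose {n : ℕ} {M : Matrix (Fin n) (Fin n) ℝ} (hM : M.IsHermitian) : Mᵀ = M := by
  rw [← conjTranspose_eq_transpose_of_trivial]; exact hM.eq

lemma aux_dot_swap {n : ℕ} {M : Matrix (Fin n) (Fin n) ℝ} (hM : M.IsHermitian) (u y : Fin n → ℝ) :
    u ⬝ᵥ (M *ᵥ y) = (M *ᵥ u) ⬝ᵥ y := by
  rw [dotProduct_mulVec, ← Matrix.mulVec_transpose, aux_herm_transpose hM]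

lemma aux_quad_form {n : ℕ} {M : Matrix (Fin n) (Fin n) ℝ} (hM : M.IsHermitian) (y : Fin n → ℝ) :
    y ⬝ᵥ (M *ᵥ y)
      = ∑ i, hM.eigenvalues i * ((hM.eigenvectorBasis i : Fin n → ℝ) ⬝ᵥ y)^2 := by
  nth_rewrite 1 [aux_onb_expand hM y]
  rw [aux_sum_dot]
  refine Finset.sum_congr rfl fun i _ => ?_
  have hme : M *ᵥ ((hM.eigenvectorBasis i : Fin n → ℝ))
      = hM.eigenvalues i • (hM.eigenvectorBasis i : Fin n → ℝ) := hM.mulVec_eigenvectorBasis i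
  rw [smul_dotProduct, aux_dot_swap hM, hme, smul_dotProduct]
  simp only [smul_eq_mul]
  ring

lemma aux_norm_form {n : ℕ} {M : Matrix (Fin n) (Fin n) ℝ} (hM : M.IsHermitian) (y : Fin n → ℝ) :
    y ⬝ᵥ y = ∑ i, ((hM.eigenvectorBasis i : Fin n → ℝ) ⬝ᵥ y)^2 := by
  nth_rewrite 1 [aux_onb_expand hM y]
  rw [aux_sum_dot]
  refine Finset.sum_congr rfl fun i _ => ?_
  rw [smul_dotProduct]
  simp only [smul_eq_mul]
  ring

lemma aux_two_le_countP {l : List ℝ} (hs : l.Pairwise (· ≥ ·)) (hl : 2 ≤ l.length) {c : ℝ}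
    (hc : c < l.getD 1 0) : 2 ≤ l.countP (fun x => decide (c < x)) := by
  rcases l with _ | ⟨a, _ | ⟨b, tl⟩⟩
  · simp at hl
  · simp at hl
  · simp only [List.getD_cons_succ, List.getD_cons_zero] at hc
    have hab : a ≥ b := (List.pairwise_cons.mp hs).1 b (by simp)
    have hca : c < a := lt_of_lt_of_le hc hab
    simp [List.countP_cons, hc, hca]

lemma aux_countP_le_one {l : List ℝ} (hs : l.Pairwise (· ≥ ·)) (hl : 2 ≤ l.length) :
    l.countP (fun x => decide (l.getD 1 0 < x)) ≤ 1 := by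
  rcases l with _ | ⟨a, _ | ⟨b, tl⟩⟩
  · simp at hl
  · simp at hl
  · simp only [List.getD_cons_succ, List.getD_cons_zero]
    have htl : ∀ x ∈ tl, b ≥ x := (List.pairwise_cons.mp (List.pairwise_cons.mp hs).2).1
    have h0 : tl.countP (fun x => decide (b < x)) = 0 := by
      rw [List.countP_eq_zero]
      intro x hx
      simpa using not_lt.mpr (htl x hx)
    simp only [List.countP_cons, h0, decide_eq_true_eq]
    split <;> split <;> simp_all

end Aux

/-- The eigenvalues of a real symmetric matrix, listed in nonincreasing order
(with multiplicity); the empty list for non-symmetric matrices. -/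
noncomputable def sortedEigs {n : ℕ} (M : Matrix (Fin n) (Fin n) ℝ) : List ℝ :=
  if hM : M.IsHermitian then (Finset.univ.val.map hM.eigenvalues).sort (· ≥ ·) else []

section Aux2

lemma aux_sortedEigs_eq {n : ℕ} {M : Matrix (Fin n) (Fin n) ℝ} (hM : M.IsHermitian) :
    sortedEigs M = (Finset.univ.val.map hM.eigenvalues).sort (· ≥ ·) := dif_pos hM

lemma aux_sortedEigs_length {n : ℕ} {M : Matrix (Fin n) (Fin n) ℝ} (hM : M.IsHermitian) :
    (sortedEigs M).length = n := by
  rw [aux_sortedEigs_eq hM, Multiset.length_sort]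
  simp

lemma aux_sortedEigs_sorted {n : ℕ} {M : Matrix (Fin n) (Fin n) ℝ} (hM : M.IsHermitian) :
    (sortedEigs M).Pairwise (· ≥ ·) := by
  rw [aux_sortedEigs_eq hM]; exact Multiset.pairwise_sort _ _

lemma aux_sortedEigs_countP {n : ℕ} {M : Matrix (Fin n) (Fin n) ℝ} (hM : M.IsHermitian)
    (p : ℝ → Prop) [DecidablePred p] :
    (sortedEigs M).countP (fun x => decide (p x))
      = (Finset.univ.filter (fun i => p (hM.eigenvalues i))).card := by
  rw [aux_sortedEigs_eq hM, ← Multiset.coe_countP, Multiset.sort_eq, Multiset.countP_map]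
  rfl

end Aux2

/-- Let `A` be a real symmetric `n×n` matrix (`n ≥ 2`) with
eigenvalues `λ_1 ≥ … ≥ λ_n` and `lam = max (λ_2, |λ_n|)`.  If `λ_1 ≥ 4·lam`, then
for every unit vector `f`, the second-largest eigenvalue of
`(I − f fᵀ) A (I − f fᵀ)` is at most `(3/4)·λ_1`. -/
theorem projected_second_eigenvalue_le
    {n : ℕ} (hn : 2 ≤ n) (A : Matrix (Fin n) (Fin n) ℝ) (hA : A.IsHermitian)
    (lam : ℝ)
    (hlam : lam = max ((sortedEigs A).getD 1 0) |(sortedEigs A).getD (n-1) 0|)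
    (hgap : (sortedEigs A).getD 0 0 ≥ 4 * lam)
    (f : Fin n → ℝ) (hf : f ⬝ᵥ f = 1) :
    (sortedEigs ((1 - vecMulVec f f) * A * (1 - vecMulVec f f))).getD 1 0
      ≤ (3/4) * (sortedEigs A).getD 0 0 := by
  classical
  set P : Matrix (Fin n) (Fin n) ℝ := 1 - vecMulVec f f with hPdef
  set B : Matrix (Fin n) (Fin n) ℝ := P * A * P with hBdef
  -- P is symmetric
  have hPt : Pᵀ = P := by
    rw [hPdef, transpose_sub, transpose_one]
    congr 1
    ext i j
    simp [vecMulVec_apply, mul_comm]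
  have hP : P.IsHermitian := by
    rw [Matrix.IsHermitian, conjTranspose_eq_transpose_of_trivial, hPt]
  have hB : B.IsHermitian := by
    rw [Matrix.IsHermitian, conjTranspose_eq_transpose_of_trivial, hBdef,
      transpose_mul, transpose_mul, hPt, aux_herm_transpose hA, Matrix.mul_assoc]
  -- action of P on vectors
  have hPv : ∀ z : Fin n → ℝ, P *ᵥ z = z - (f ⬝ᵥ z) • f := by
    intro z
    rw [hPdef, sub_mulVec, one_mulVec]
    congr 1
    ext k
    simp only [mulVec, vecMulVec_apply, dotProduct, Pi.smul_apply, smul_eq_mul,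
      Finset.sum_mul, Finset.mul_sum]
    exact Finset.sum_congr rfl fun l _ => by ring
  have hPP : ∀ z : Fin n → ℝ, P *ᵥ (P *ᵥ z) = P *ᵥ z := by
    intro z
    rw [hPv z, hPv]
    have h1 : f ⬝ᵥ (z - (f ⬝ᵥ z) • f) = 0 := by
      rw [dotProduct_sub, dotProduct_smul, hf]
      simp
    rw [h1]
    simp
  -- abbreviations
  set s₀ : ℝ := (sortedEigs A).getD 0 0 with hs₀
  set s₁ : ℝ := (sortedEigs A).getD 1 0 with hs₁
  have hlam0 : 0 ≤ lam := hlam ▸ le_trans (abs_nonneg _) (le_max_right _ _)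
  have hs₁lam : s₁ ≤ lam := hlam ▸ le_max_left _ _
  have hlamt : lam ≤ (3/4) * s₀ := by linarith
  have ht0 : 0 ≤ (3/4) * s₀ := le_trans hlam0 hlamt
  by_contra hcon
  push_neg at hcon
  -- two eigenvalues of B above (3/4)*s₀
  have hlenB : (sortedEigs B).length = n := aux_sortedEigs_length hB
  have hcount2 : 2 ≤ (sortedEigs B).countP (fun x => decide ((3/4) * s₀ < x)) :=
    aux_two_le_countP (aux_sortedEigs_sorted hB) (by omega) hcon
  rw [aux_sortedEigs_countP hB (fun x => (3/4) * s₀ < x)] at hcount2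
  obtain ⟨i, hi, j, hj, hij⟩ := Finset.one_lt_card.mp hcount2
  have hμi : (3/4) * s₀ < hB.eigenvalues i := (Finset.mem_filter.mp hi).2
  have hμj : (3/4) * s₀ < hB.eigenvalues j := (Finset.mem_filter.mp hj).2
  -- at most one eigenvalue of A above s₁
  have hcard1 : (Finset.univ.filter (fun k => s₁ < hA.eigenvalues k)).card ≤ 1 := by
    have := aux_countP_le_one (aux_sortedEigs_sorted hA)
      (by rw [aux_sortedEigs_length hA]; omega)
    rwa [aux_sortedEigs_countP hA (fun x => (sortedEigs A).getD 1 0 < x)] at this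
  obtain ⟨i₀, hi₀⟩ : ∃ i₀ : Fin n, ∀ k : Fin n, k ≠ i₀ → hA.eigenvalues k ≤ s₁ := by
    rcases (Finset.univ.filter (fun k => s₁ < hA.eigenvalues k)).eq_empty_or_nonempty with
      he | ⟨i₀, hi₀m⟩
    · refine ⟨⟨0, by omega⟩, fun k _ => ?_⟩
      by_contra hk
      push_neg at hk
      have : k ∈ Finset.univ.filter (fun k => s₁ < hA.eigenvalues k) :=
        Finset.mem_filter.mpr ⟨Finset.mem_univ _, hk⟩
      simp [he] at this
    · refine ⟨i₀, fun k hk => ?_⟩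
      by_contra hks
      push_neg at hks
      exact hk (Finset.card_le_one.mp hcard1 k
        (Finset.mem_filter.mpr ⟨Finset.mem_univ _, hks⟩) i₀ hi₀m)
  -- the test vector
  set w : Fin n → Fin n → ℝ := fun k => (hB.eigenvectorBasis k : Fin n → ℝ) with hw
  set u₀ : Fin n → ℝ := (hA.eigenvectorBasis i₀ : Fin n → ℝ) with hu₀
  obtain ⟨a, b, hab, hφ⟩ : ∃ a b : ℝ, ¬(a = 0 ∧ b = 0) ∧
      a * (u₀ ⬝ᵥ (P *ᵥ w i)) + b * (u₀ ⬝ᵥ (P *ᵥ w j)) = 0 := by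
    by_cases h0 : u₀ ⬝ᵥ (P *ᵥ w i) = 0 ∧ u₀ ⬝ᵥ (P *ᵥ w j) = 0
    · exact ⟨1, 0, by simp, by rw [h0.1, h0.2]; ring⟩
    · exact ⟨u₀ ⬝ᵥ (P *ᵥ w j), -(u₀ ⬝ᵥ (P *ᵥ w i)),
        by rintro ⟨h1, h2⟩; exact h0 ⟨neg_eq_zero.mp h2, h1⟩, by ring⟩
  set x : Fin n → ℝ := a • w i + b • w j with hx
  set y : Fin n → ℝ := P *ᵥ x with hy
  have hyexp : y = a • (P *ᵥ w i) + b • (P *ᵥ w j) := by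
    rw [hy, hx, mulVec_add, mulVec_smul, mulVec_smul]
  have hφy : u₀ ⬝ᵥ y = 0 := by
    rw [hyexp, dotProduct_add, dotProduct_smul, dotProduct_smul, smul_eq_mul, smul_eq_mul, hφ]
  -- quadratic form bound on A side
  have hyA : y ⬝ᵥ (A *ᵥ y) ≤ s₁ * (y ⬝ᵥ y) := by
    rw [aux_quad_form hA, aux_norm_form hA, Finset.mul_sum]
    refine Finset.sum_le_sum fun k _ => ?_
    rcases eq_or_ne k i₀ with rfl | hk
    · rw [← hu₀, hφy]
      simp
    · exact mul_le_mul_of_nonneg_right (hi₀ k hk) (sq_nonneg _)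
  have hyy0 : 0 ≤ y ⬝ᵥ y := by
    rw [aux_norm_form hA]
    exact Finset.sum_nonneg fun _ _ => sq_nonneg _
  -- norm shrinks under P
  have hyx : y ⬝ᵥ y ≤ x ⬝ᵥ x := by
    have h1 : x ⬝ᵥ (P *ᵥ (P *ᵥ x)) = y ⬝ᵥ y := aux_dot_swap hP x (P *ᵥ x)
    rw [hPP] at h1
    rw [hPv] at h1
    rw [dotProduct_sub, dotProduct_smul, smul_eq_mul, dotProduct_comm x f] at h1
    nlinarith [mul_self_nonneg (f ⬝ᵥ x)]
  -- B quadratic form equals A quadratic form of y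
  have hBAy : x ⬝ᵥ (B *ᵥ x) = y ⬝ᵥ (A *ᵥ y) := by
    have h2 : B *ᵥ x = P *ᵥ (A *ᵥ y) := by
      rw [hBdef, hy, ← mulVec_mulVec, ← mulVec_mulVec]
    rw [h2, aux_dot_swap hP, ← hy]
  -- B quadratic form in eigencoordinates
  have hBwi : B *ᵥ w i = hB.eigenvalues i • w i := hB.mulVec_eigenvectorBasis i
  have hBwj : B *ᵥ w j = hB.eigenvalues j • w j := hB.mulVec_eigenvectorBasis j
  have hxBx : x ⬝ᵥ (B *ᵥ x) = a^2 * hB.eigenvalues i + b^2 * hB.eigenvalues j := by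
    have h3 : B *ᵥ x = a • (hB.eigenvalues i • w i) + b • (hB.eigenvalues j • w j) := by
      rw [hx, mulVec_add, mulVec_smul, mulVec_smul, hBwi, hBwj]
    rw [h3, hx]
    have d1 : w i ⬝ᵥ w i = 1 := by rw [hw]; simpa using aux_onb_dot hB i i
    have d2 : w j ⬝ᵥ w j = 1 := by rw [hw]; simpa using aux_onb_dot hB j j
    have d3 : w i ⬝ᵥ w j = 0 := by rw [hw]; simpa [hij] using aux_onb_dot hB i j
    have d4 : w j ⬝ᵥ w i = 0 := by rw [hw]; simpa [hij.symm] using aux_onb_dot hB j i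
    simp only [add_dotProduct, dotProduct_add, smul_dotProduct, dotProduct_smul,
      smul_eq_mul, d1, d2, d3, d4]
    ring
  have hxx : x ⬝ᵥ x = a^2 + b^2 := by
    rw [hx]
    have d1 : w i ⬝ᵥ w i = 1 := by rw [hw]; simpa using aux_onb_dot hB i i
    have d2 : w j ⬝ᵥ w j = 1 := by rw [hw]; simpa using aux_onb_dot hB j j
    have d3 : w i ⬝ᵥ w j = 0 := by rw [hw]; simpa [hij] using aux_onb_dot hB i j
    have d4 : w j ⬝ᵥ w i = 0 := by rw [hw]; simpa [hij.symm] using aux_onb_dot hB j i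
    simp only [add_dotProduct, dotProduct_add, smul_dotProduct, dotProduct_smul,
      smul_eq_mul, d1, d2, d3, d4]
    ring
  -- contradiction
  have hup : x ⬝ᵥ (B *ᵥ x) ≤ (3/4) * s₀ * (x ⬝ᵥ x) := by
    rw [hBAy]
    have h1 : s₁ * (y ⬝ᵥ y) ≤ (3/4) * s₀ * (y ⬝ᵥ y) :=
      mul_le_mul_of_nonneg_right (le_trans hs₁lam hlamt) hyy0
    have h2 : (3/4) * s₀ * (y ⬝ᵥ y) ≤ (3/4) * s₀ * (x ⬝ᵥ x) :=
      mul_le_mul_of_nonneg_left hyx ht0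
    linarith
  have hlow : (3/4) * s₀ * (x ⬝ᵥ x) < x ⬝ᵥ (B *ᵥ x) := by
    rw [hxBx, hxx]
    have e1 : a^2 * ((3/4) * s₀) ≤ a^2 * hB.eigenvalues i :=
      mul_le_mul_of_nonneg_left hμi.le (sq_nonneg a)
    have e2 : b^2 * ((3/4) * s₀) ≤ b^2 * hB.eigenvalues j :=
      mul_le_mul_of_nonneg_left hμj.le (sq_nonneg b)
    rcases (not_and_or.mp hab) with ha | hb
    · have ha2 : 0 < a^2 := by positivity
      have e1' : a^2 * ((3/4) * s₀) < a^2 * hB.eigenvalues i :=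
        mul_lt_mul_of_pos_left hμi ha2
      linarith
    · have hb2 : 0 < b^2 := by positivity
      have e2' : b^2 * ((3/4) * s₀) < b^2 * hB.eigenvalues j :=
        mul_lt_mul_of_pos_left hμj hb2
      linarith
  linarith
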